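/- arXiv:1401.3935 — 5 statements merged into one kernel-verified Lean document; each statement's English description precedes it below -/
import Mathlib

section
/- Let G be a loopless finite connected graph with a bridge e having endpoints v1, v2, with connected components G1, G2 of G minus e (v_i in G_i). If d_i is a v_i-reduced divisor on G_i for i = 1, 2, then the divisor on G given by the pushforward of (d1 − d1(v1)·[v1]) plus the pushforward of (d2 − d2(v2)·[v2]) plus (d1(v1) + d2(v2))·[v1] is a v1-reduced divisor on G. -/
open scoped Classical

namespace BN

/-- A finite multigraph: `E u v` is the number of edges (other than loops)
between distinct vertices `u` and `v`, and `loops v` is the number of loops at `v`. -/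
structure MultiGraph (V : Type) where
  E : V → V → ℕ
  loops : V → ℕ
  symm : ∀ u v, E u v = E v u
  noDiag : ∀ v, E v v = 0

variable {V V1 V2 : Type}

/-- The divisor `[v]`. -/
def one [DecidableEq V] (v : V) : V → ℤ := fun w => if w = v then 1 else 0

/-- Degree of a divisor. -/
def deg [Fintype V] (d : V → ℤ) : ℤ := ∑ v, d v

/-- Effective divisor. -/
def Effective (d : V → ℤ) : Prop := ∀ v, 0 ≤ d v

namespace MultiGraph

/-- Divisor of a rational function (loops contribute nothing). -/
def div [Fintype V] (G : MultiGraph V) (f : V → ℤ) : V → ℤ :=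
  fun v => ∑ w, (G.E v w : ℤ) * (f w - f v)

def Principal [Fintype V] (G : MultiGraph V) (d : V → ℤ) : Prop :=
  ∃ f : V → ℤ, d = G.div f

def LinEquiv [Fintype V] (G : MultiGraph V) (d d' : V → ℤ) : Prop :=
  G.Principal (d' - d)

/-- `d` is linearly equivalent to an effective divisor. -/
def Winnable [Fintype V] (G : MultiGraph V) (d : V → ℤ) : Prop :=
  ∃ e : V → ℤ, Effective e ∧ G.LinEquiv d e

/-- The Baker–Norine rank of a divisor. -/
noncomputable def rank [Fintype V] (G : MultiGraph V) (d : V → ℤ) : ℤ :=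
  if G.Winnable d then
    (sSup {s : ℕ | ∀ e : V → ℤ, Effective e → deg e = (s : ℤ) → G.Winnable (d - e)} : ℕ)
  else -1

def Connected (G : MultiGraph V) : Prop :=
  ∀ u v : V, Relation.ReflTransGen (fun a b => 0 < G.E a b) u v

def Loopless (G : MultiGraph V) : Prop := ∀ v, G.loops v = 0

/-- Number of edges from `v` to vertices outside `A`. -/
def outdeg [Fintype V] [DecidableEq V] (G : MultiGraph V) (A : Finset V) (v : V) : ℕ :=
  ∑ w ∈ Finset.univ.filter (fun w => w ∉ A), G.E v w

/-- `v0`-reduced divisor. -/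
def Reduced [Fintype V] [DecidableEq V] (G : MultiGraph V) (v0 : V) (d : V → ℤ) : Prop :=
  (∀ v, v ≠ v0 → 0 ≤ d v) ∧
  ∀ A : Finset V, A.Nonempty → v0 ∉ A → ∃ v ∈ A, d v < (G.outdeg A v : ℤ)

def valence [Fintype V] (G : MultiGraph V) (v : V) : ℕ :=
  (∑ w, G.E v w) + 2 * G.loops v

/-- Canonical divisor. -/
def K [Fintype V] (G : MultiGraph V) : V → ℤ := fun v => (G.valence v : ℤ) - 2

def edgeCount [Fintype V] (G : MultiGraph V) : ℕ :=
  (∑ v, ∑ w, G.E v w) / 2 + ∑ v, G.loops v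

end MultiGraph

open MultiGraph

/-- The graph obtained by joining `G1` and `G2` by a single bridge from `v1` to `v2`. -/
def bridgeJoin [DecidableEq V1] [DecidableEq V2]
    (G1 : MultiGraph V1) (G2 : MultiGraph V2) (v1 : V1) (v2 : V2) :
    MultiGraph (V1 ⊕ V2) where
  E x y :=
    match x, y with
    | .inl a, .inl b => G1.E a b
    | .inr a, .inr b => G2.E a b
    | .inl a, .inr b => if a = v1 ∧ b = v2 then 1 else 0
    | .inr b, .inl a => if a = v1 ∧ b = v2 then 1 else 0
  loops := Sum.elim G1.loops G2.loops
  symm := by rintro (a | a) (b | b) <;> simp [G1.symm, G2.symm]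
  noDiag := by rintro (a | a) <;> simp [G1.noDiag, G2.noDiag]

/-- The virtual loopless graph `Ḡ•` of a vertex-weighted graph `(G, ω)`:
insert a vertex into each loop of `G` and add `ω v` subdivided loops at each `v`.
The inserted vertices are the pairs `⟨v, i⟩` with `i : Fin (G.loops v + ω v)`,
each joined to `v` by two parallel edges. -/
noncomputable def bullet (G : MultiGraph V) (ω : V → ℕ) :
    MultiGraph (V ⊕ (Σ v : V, Fin (G.loops v + ω v))) where
  E x y :=
    match x, y with
    | .inl u, .inl v => G.E u v
    | .inl u, .inr w => if u = w.1 then 2 else 0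
    | .inr w, .inl u => if u = w.1 then 2 else 0
    | .inr _, .inr _ => 0
  loops := fun _ => 0
  symm := by rintro (u | u) (v | v) <;> simp [G.symm]
  noDiag := by rintro (v | v) <;> simp [G.noDiag]

/-- The rank `r_Ḡ(d)` of a divisor on a vertex-weighted graph `(G, ω)`:
the Baker–Norine rank of `d` on `Ḡ•`. -/
noncomputable def wrank [Fintype V] [DecidableEq V] (G : MultiGraph V) (ω : V → ℕ)
    (d : V → ℤ) : ℤ :=
  (bullet G ω).rank (Sum.elim d 0)

/-- `v` is a base-point of the complete linear system `|d|•` on `Ḡ•`. -/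
def wBasePoint [Fintype V] [DecidableEq V] (G : MultiGraph V) (ω : V → ℕ)
    (d : V → ℤ) (v : V) : Prop :=
  wrank G ω (d - one v) = wrank G ω d

/-- Genus of a vertex-weighted graph. -/
def genus [Fintype V] (G : MultiGraph V) (ω : V → ℕ) : ℤ :=
  (G.edgeCount : ℤ) - Fintype.card V + 1 + ∑ v, (ω v : ℤ)

/-- A vertex-weighted graph of genus `≥ 2` is hyperelliptic if `Ḡ•` carries a
divisor of degree `2` and rank `1`. -/
def Hyperelliptic [Fintype V] [DecidableEq V] (G : MultiGraph V) (ω : V → ℕ) : Prop :=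
  2 ≤ genus G ω ∧ ∃ d, deg d = 2 ∧ (bullet G ω).rank d = 1

/-- The canonical divisor `K_Ḡ` of a vertex-weighted graph, viewed as a divisor on `G`. -/
noncomputable def wK [Fintype V] (G : MultiGraph V) (ω : V → ℕ) : V → ℤ :=
  fun v => (bullet G ω).K (Sum.inl v)

theorem MultiGraph.Reduced.congr_of_ne [Fintype V] [DecidableEq V] {G : MultiGraph V} {v0 : V}
    {d d' : V → ℤ} (hd : G.Reduced v0 d) (h : ∀ v, v ≠ v0 → d' v = d v) : G.Reduced v0 d' := by
  refine ⟨fun v hv => h v hv ▸ hd.1 v hv, fun A hA hv0 => ?_⟩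
  obtain ⟨v, hvA, hlt⟩ := hd.2 A hA hv0
  exact ⟨v, hvA, h v (ne_of_mem_of_not_mem hvA hv0) ▸ hlt⟩

section bridgeJoin

variable [Fintype V1] [DecidableEq V1] [Fintype V2] [DecidableEq V2]
  {G1 : MultiGraph V1} {G2 : MultiGraph V2} {v1 : V1} {v2 : V2}

theorem outdeg_toLeft_le_outdeg_bridgeJoin (A : Finset (V1 ⊕ V2)) (v : V1) :
    G1.outdeg A.toLeft v ≤ (bridgeJoin G1 G2 v1 v2).outdeg A (.inl v) := by
  rw [outdeg, outdeg, Finset.sum_filter, Finset.sum_filter, Fintype.sum_sum_type]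
  exact le_add_right (by simp [bridgeJoin])

theorem outdeg_toRight_le_outdeg_bridgeJoin (A : Finset (V1 ⊕ V2)) (v : V2) :
    G2.outdeg A.toRight v ≤ (bridgeJoin G1 G2 v1 v2).outdeg A (.inr v) := by
  rw [outdeg, outdeg, Finset.sum_filter, Finset.sum_filter, Fintype.sum_sum_type]
  exact le_add_left (by simp [bridgeJoin])

theorem one_le_outdeg_bridgeJoin_inr {A : Finset (V1 ⊕ V2)} (hv1 : .inl v1 ∉ A) :
    1 ≤ (bridgeJoin G1 G2 v1 v2).outdeg A (.inr v2) := by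
  have hmem : (.inl v1 : V1 ⊕ V2) ∈ Finset.univ.filter (· ∉ A) := by simpa using hv1
  calc 1 = (bridgeJoin G1 G2 v1 v2).E (.inr v2) (.inl v1) := by simp [bridgeJoin]
    _ ≤ _ := Finset.single_le_sum (fun _ _ => Nat.zero_le _) hmem

/-- A set `A` avoiding `v1` either meets `G1`, where `d` is reduced, or lies in `G2`; there it
contains `v2`, which is non-saturated thanks to the bridge, or it avoids `v2`, where `d` is reduced. -/
theorem reduced_bridgeJoin {d : V1 ⊕ V2 → ℤ} (hd1 : G1.Reduced v1 (d ∘ .inl))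
    (hd2 : G2.Reduced v2 (d ∘ .inr)) (hv2 : d (.inr v2) = 0) :
    (bridgeJoin G1 G2 v1 v2).Reduced (.inl v1) d := by
  constructor
  · rintro (v | v) hv
    · exact hd1.1 v fun h => hv (h ▸ rfl)
    · by_cases h : v = v2
      · exact h ▸ hv2.ge
      · exact hd2.1 v h
  · intro A hA hv1
    by_cases hA1 : A.toLeft.Nonempty
    · obtain ⟨v, hvA, hlt⟩ := hd1.2 A.toLeft hA1 (by simpa using hv1)
      exact ⟨.inl v, Finset.mem_toLeft.1 hvA,
        hlt.trans_le (by exact_mod_cast outdeg_toLeft_le_outdeg_bridgeJoin A v)⟩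
    by_cases hv2A : .inr v2 ∈ A
    · exact ⟨.inr v2, hv2A, by rw [hv2]; exact_mod_cast one_le_outdeg_bridgeJoin_inr hv1⟩
    have hA2 : A.toRight.Nonempty := by
      obtain ⟨v | v, hv⟩ := hA
      · exact absurd ⟨v, Finset.mem_toLeft.2 hv⟩ hA1
      · exact ⟨v, Finset.mem_toRight.2 hv⟩
    obtain ⟨v, hvA, hlt⟩ := hd2.2 A.toRight hA2 (by simpa using hv2A)
    exact ⟨.inr v, Finset.mem_toRight.1 hvA,
      hlt.trans_le (by exact_mod_cast outdeg_toRight_le_outdeg_bridgeJoin A v)⟩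

end bridgeJoin

theorem statement_1_general {V1 V2 : Type} [Fintype V1] [DecidableEq V1] [Fintype V2] [DecidableEq V2]
    (G1 : MultiGraph V1) (G2 : MultiGraph V2)
    (v1 : V1) (v2 : V2) (d1 : V1 → ℤ) (d2 : V2 → ℤ)
    (hd1 : G1.Reduced v1 d1) (hd2 : G2.Reduced v2 d2) :
    (bridgeJoin G1 G2 v1 v2).Reduced (Sum.inl v1)
      (Sum.elim (d1 - d1 v1 • one v1) (d2 - d2 v2 • one v2)
        + (d1 v1 + d2 v2) • one (Sum.inl v1)) := by
  refine reduced_bridgeJoin (hd1.congr_of_ne fun v hv => ?_) (hd2.congr_of_ne fun v hv => ?_) ?_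
    <;> simp_all [one]

/-- glueing reduced divisors across a bridge. -/
theorem statement_1 {V1 V2 : Type} [Fintype V1] [DecidableEq V1] [Fintype V2] [DecidableEq V2]
    (G1 : MultiGraph V1) (G2 : MultiGraph V2)
    (hl1 : G1.Loopless) (hl2 : G2.Loopless)
    (hc1 : G1.Connected) (hc2 : G2.Connected)
    (v1 : V1) (v2 : V2) (d1 : V1 → ℤ) (d2 : V2 → ℤ)
    (hd1 : G1.Reduced v1 d1) (hd2 : G2.Reduced v2 d2) :
    (bridgeJoin G1 G2 v1 v2).Reduced (Sum.inl v1)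
      (Sum.elim (d1 - d1 v1 • one v1) (d2 - d2 v2 • one v2)
        + (d1 v1 + d2 v2) • one (Sum.inl v1)) :=
  statement_1_general G1 G2 v1 v2 d1 d2 hd1 hd2

end BN
end

section
/- For any loopless finite connected graph G, any base vertex v0, and any divisor d on G, there exists a unique v0-reduced divisor d' linearly equivalent to d; moreover the rank r_G(d) is nonnegative if and only if d' is effective. -/
open scoped Classical

namespace BN

variable {V V1 V2 : Type}

open MultiGraph

/-!
A set `A ∌ v0` with `x v ≥ outdeg_A v` on `A` can fire, sending one chip along each edge
leaving `A`, without any vertex other than `v0` going into debt. Connectivity provides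
`h ≥ 0` with `div h ≥ 1` away from `v0`; since the Laplacian is symmetric, each such firing
raises `∑ h v * x v` by `∑ v ∈ A, div h v ≥ 1`, and this sum is bounded on the divisors
equivalent to `d` that are nonnegative off `v0` and bounded below at `v0`. A maximizer is
therefore reduced.

Conversely, if a reduced `x` moves by `div f` to a divisor nonnegative off `v0`, then `f` is
maximal at `v0`, since otherwise the set of maximizers of `f` would violate reducedness.
Applied to `f` and `-f` this gives uniqueness; applied to a move to an effective divisor it
gives `div f v0 ≤ 0`, hence `x v0 ≥ 0`.
-/

namespace MultiGraph

section Laplacian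

variable [Fintype V] (G : MultiGraph V)

lemma div_apply (f : V → ℤ) (v : V) :
    G.div f v = ∑ w, (G.E v w : ℤ) * f w - (∑ w, (G.E v w : ℤ)) * f v := by
  simp only [div, mul_sub, Finset.sum_sub_distrib, Finset.sum_mul]

lemma div_add (f g : V → ℤ) : G.div (f + g) = G.div f + G.div g := by
  ext v
  simp only [div, Pi.add_apply, ← Finset.sum_add_distrib]
  exact Finset.sum_congr rfl fun w _ => by ring

lemma div_neg (f : V → ℤ) : G.div (-f) = -G.div f := by
  ext v
  simp only [div, Pi.neg_apply, ← Finset.sum_neg_distrib]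
  exact Finset.sum_congr rfl fun w _ => by ring

lemma div_smul (c : ℤ) (f : V → ℤ) : G.div (c • f) = c • G.div f := by
  ext v
  simp only [div, Pi.smul_apply, smul_eq_mul, Finset.mul_sum]
  exact Finset.sum_congr rfl fun w _ => by ring

lemma div_const (c : ℤ) : G.div (fun _ => c) = 0 := by
  ext v
  simp [div]

lemma div_nonpos_of_forall_le {f : V → ℤ} {v : V} (hv : ∀ w, f w ≤ f v) : G.div f v ≤ 0 :=
  Finset.sum_nonpos fun w _ =>
    mul_nonpos_of_nonneg_of_nonpos (Int.natCast_nonneg _) (sub_nonpos.2 (hv w))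

lemma sum_mul_div_comm (f g : V → ℤ) : ∑ v, f v * G.div g v = ∑ v, g v * G.div f v := by
  have expand : ∀ a b : V → ℤ, ∑ v, a v * G.div b v =
      ∑ v, ∑ w, (G.E v w : ℤ) * (a v * b w) -
        ∑ v, ∑ w, (G.E v w : ℤ) * (a v * b v) := by
    intro a b
    simp only [div, Finset.mul_sum, ← Finset.sum_sub_distrib]
    exact Finset.sum_congr rfl fun v _ => Finset.sum_congr rfl fun w _ => by ring
  rw [expand, expand, Finset.sum_comm (f := fun v w => (G.E v w : ℤ) * (f v * g w))]
  congr 1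
  · exact Finset.sum_congr rfl fun v _ => Finset.sum_congr rfl fun w _ => by
      rw [G.symm w v]; ring
  · exact Finset.sum_congr rfl fun v _ => Finset.sum_congr rfl fun w _ => by ring

lemma deg_div (f : V → ℤ) : deg (G.div f) = 0 := by
  simpa [deg, G.div_const] using G.sum_mul_div_comm (fun _ => 1) f

end Laplacian

section LinEquiv

variable [Fintype V] {G : MultiGraph V} {d e k : V → ℤ}

lemma linEquiv_iff : G.LinEquiv d e ↔ ∃ f, e = d + G.div f := by
  simp only [LinEquiv, Principal, sub_eq_iff_eq_add']

lemma linEquiv_add_div (d f : V → ℤ) : G.LinEquiv d (d + G.div f) :=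
  linEquiv_iff.2 ⟨f, rfl⟩

lemma LinEquiv.symm (h : G.LinEquiv d e) : G.LinEquiv e d := by
  obtain ⟨f, rfl⟩ := linEquiv_iff.1 h
  exact linEquiv_iff.2 ⟨-f, by rw [div_neg, add_neg_cancel_right]⟩

lemma LinEquiv.trans (h₁ : G.LinEquiv d e) (h₂ : G.LinEquiv e k) : G.LinEquiv d k := by
  obtain ⟨f, rfl⟩ := linEquiv_iff.1 h₁
  obtain ⟨g, rfl⟩ := linEquiv_iff.1 h₂
  exact linEquiv_iff.2 ⟨f + g, by rw [div_add, add_assoc]⟩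

lemma LinEquiv.deg_eq (h : G.LinEquiv d e) : deg e = deg d := by
  obtain ⟨f, rfl⟩ := linEquiv_iff.1 h
  simp only [deg, Pi.add_apply, Finset.sum_add_distrib, add_eq_left]
  exact G.deg_div f

lemma rank_nonneg_iff_winnable : 0 ≤ G.rank d ↔ G.Winnable d := by
  rw [rank]
  split_ifs with h
  · exact iff_of_true (Int.natCast_nonneg _) h
  · exact iff_of_false (by omega) h

end LinEquiv

section Firing

variable [Fintype V] [DecidableEq V] (G : MultiGraph V)

lemma outdeg_eq_sum_ite (A : Finset V) (v : V) :
    (G.outdeg A v : ℤ) = ∑ w, if w ∉ A then (G.E v w : ℤ) else 0 := by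
  rw [outdeg, Nat.cast_sum, Finset.sum_filter]

lemma div_indicator_of_mem {A : Finset V} {v : V} (hv : v ∈ A) :
    G.div ((A : Set V).indicator 1) v = -G.outdeg A v := by
  rw [div, outdeg_eq_sum_ite, ← Finset.sum_neg_distrib]
  refine Finset.sum_congr rfl fun w _ => ?_
  by_cases hw : w ∈ A <;> simp [hv, hw]

lemma div_indicator_nonneg_of_notMem {A : Finset V} {v : V} (hv : v ∉ A) :
    0 ≤ G.div ((A : Set V).indicator 1) v := by
  refine Finset.sum_nonneg fun w _ => mul_nonneg (Int.natCast_nonneg _) ?_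
  by_cases hw : w ∈ A <;> simp [hv, hw]

lemma div_le_neg_outdeg {f : V → ℤ} {A : Finset V} {v : V}
    (hv : ∀ w, f w ≤ f v) (hA : ∀ w ∉ A, f w < f v) : G.div f v ≤ -G.outdeg A v := by
  rw [div, outdeg_eq_sum_ite, ← Finset.sum_neg_distrib]
  refine Finset.sum_le_sum fun w _ => ?_
  by_cases hw : w ∈ A
  · simpa [hw] using mul_nonpos_of_nonneg_of_nonpos (Int.natCast_nonneg _) (sub_nonpos.2 (hv w))
  · have : f w - f v ≤ -1 := by linarith [hA w hw]
    simpa [hw] using mul_le_mul_of_nonneg_left this (Int.natCast_nonneg (G.E v w))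

lemma sum_mul_add_div_indicator (h x : V → ℤ) (A : Finset V) :
    ∑ v, h v * (x + G.div ((A : Set V).indicator 1)) v =
      ∑ v, h v * x v + ∑ v ∈ A, G.div h v := by
  simp only [Pi.add_apply, mul_add, Finset.sum_add_distrib, G.sum_mul_div_comm h]
  simp [Set.indicator_apply, Finset.sum_ite_mem]

end Firing

section Reduced

variable [Fintype V] [DecidableEq V] {G : MultiGraph V} {v0 : V}

lemma Reduced.le_of_nonneg_add_div {x f : V → ℤ} (hx : G.Reduced v0 x)
    (hf : ∀ v, v ≠ v0 → 0 ≤ x v + G.div f v) (w : V) : f w ≤ f v0 := by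
  by_contra! hw
  set A := Finset.univ.filter fun v => ∀ u, f u ≤ f v
  obtain ⟨m, -, hm⟩ := Finset.exists_max_image Finset.univ f ⟨w, Finset.mem_univ w⟩
  have hA : A.Nonempty := ⟨m, by simpa [A] using hm⟩
  have hv0 : v0 ∉ A := fun h => (Finset.mem_filter.1 h).2 w |>.not_gt hw
  obtain ⟨v, hvA, hlt⟩ := hx.2 A hA hv0
  have hvmax : ∀ u, f u ≤ f v := (Finset.mem_filter.1 hvA).2
  have hout : ∀ u ∉ A, f u < f v := fun u hu => by
    obtain ⟨u', hu'⟩ : ∃ u', f u < f u' := by simpa [A] using hu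
    exact hu'.trans_le (hvmax u')
  have := G.div_le_neg_outdeg hvmax hout
  have := hf v fun h => hv0 (h ▸ hvA)
  omega

lemma Reduced.eq_of_linEquiv {d₁ d₂ : V → ℤ} (h₁ : G.Reduced v0 d₁) (h₂ : G.Reduced v0 d₂)
    (h : G.LinEquiv d₁ d₂) : d₂ = d₁ := by
  obtain ⟨f, rfl⟩ := linEquiv_iff.1 h
  have hle : ∀ w, f w ≤ f v0 := h₁.le_of_nonneg_add_div h₂.1
  have hge : ∀ w, (-f) w ≤ (-f) v0 := h₂.le_of_nonneg_add_div fun v hv => by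
    simpa [div_neg] using h₁.1 v hv
  have hconst : f = fun _ => f v0 :=
    funext fun w => le_antisymm (hle w) (neg_le_neg_iff.1 (hge w))
  rw [hconst, div_const, add_zero]

lemma Reduced.effective_of_linEquiv {x e : V → ℤ} (hx : G.Reduced v0 x) (he : Effective e)
    (h : G.LinEquiv x e) : Effective x := by
  obtain ⟨f, rfl⟩ := linEquiv_iff.1 h
  intro v
  by_cases hv : v = v0
  · subst hv
    have := G.div_nonpos_of_forall_le (hx.le_of_nonneg_add_div fun u _ => he u)
    have := he v
    rw [Pi.add_apply] at this
    linarith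
  · exact hx.1 v hv

end Reduced

section Existence

def toSimpleGraph (G : MultiGraph V) : SimpleGraph V where
  Adj a b := 0 < G.E a b
  symm := ⟨fun a b (h : 0 < G.E a b) => by rwa [G.symm]⟩
  loopless := ⟨fun v h => by simp [G.noDiag] at h⟩

variable {G : MultiGraph V}

lemma Connected.reachable (hc : G.Connected) (u v : V) : G.toSimpleGraph.Reachable u v :=
  (SimpleGraph.reachable_iff_reflTransGen u v).2 (by exact hc u v)

lemma Connected.exists_adj_dist_lt (hc : G.Connected) {v v0 : V} (hv : v ≠ v0) :
    ∃ w, 0 < G.E v w ∧ G.toSimpleGraph.dist w v0 < G.toSimpleGraph.dist v v0 := by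
  obtain ⟨p, hp⟩ := (hc.reachable v v0).exists_walk_length_eq_dist
  cases p with
  | nil => exact absurd rfl hv
  | cons hvw q =>
    rw [SimpleGraph.Walk.length_cons] at hp
    exact ⟨_, by exact hvw, (SimpleGraph.dist_le q).trans_lt (by omega)⟩

variable [Fintype V]

/-- Take `h v = M ^ (N - dist v v0)`, with `N` the largest distance to `v0` and `M` exceeding
every vertex degree by 2: a vertex
`v ≠ v0` has a neighbour closer to `v0`, where `h` is at least `M * h v`, and this outweighs
the loss `deg v * h v`. -/
lemma Connected.exists_nonneg_one_le_div (hc : G.Connected) (v0 : V) :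
    ∃ h : V → ℤ, (∀ v, 0 ≤ h v) ∧ ∀ v, v ≠ v0 → 1 ≤ G.div h v := by
  let r : V → ℕ := fun v => G.toSimpleGraph.dist v v0
  let M : ℤ := ∑ a, ∑ b, (G.E a b : ℤ) + 2
  let N := Finset.univ.sup r
  have hdeg_nonneg : ∀ a, 0 ≤ ∑ b, (G.E a b : ℤ) :=
    fun a => Finset.sum_nonneg fun b _ => Int.natCast_nonneg _
  have hM : ∀ v, ∑ w, (G.E v w : ℤ) ≤ M - 2 := fun v => by
    simpa [M] using Finset.single_le_sum (fun a _ => hdeg_nonneg a) (Finset.mem_univ v)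
  have hM1 : 1 ≤ M := by linarith [hM v0, hdeg_nonneg v0]
  refine ⟨fun v => M ^ (N - r v), fun v => by positivity, fun v hv => ?_⟩
  obtain ⟨w, hvw, hdist⟩ : ∃ w, 0 < G.E v w ∧ r w < r v := hc.exists_adj_dist_lt hv
  have hN : r v ≤ N := Finset.le_sup (Finset.mem_univ v)
  have hpow : M * M ^ (N - r v) ≤ M ^ (N - r w) := by
    rw [← pow_succ']
    exact pow_le_pow_right₀ hM1 (by omega)
  have hvw' : (1 : ℤ) ≤ G.E v w := by exact_mod_cast hvw
  have hpos : 1 ≤ M ^ (N - r v) := one_le_pow₀ hM1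
  calc 1 ≤ M * M ^ (N - r v) - (M - 2) * M ^ (N - r v) := by linarith
    _ ≤ G.E v w * M ^ (N - r w) - (∑ u, (G.E v u : ℤ)) * M ^ (N - r v) :=
      sub_le_sub (hpow.trans (le_mul_of_one_le_left (by positivity) hvw'))
        (mul_le_mul_of_nonneg_right (hM v) (by positivity))
    _ ≤ ∑ u, G.E v u * M ^ (N - r u) - (∑ u, (G.E v u : ℤ)) * M ^ (N - r v) := by
      gcongr
      exact Finset.single_le_sum (f := fun u => (G.E v u : ℤ) * M ^ (N - r u))
        (fun u _ => by positivity) (Finset.mem_univ w)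
    _ = G.div (fun v => M ^ (N - r v)) v := (G.div_apply _ v).symm

lemma Connected.exists_linEquiv_nonneg_off (hc : G.Connected) (v0 : V) (d : V → ℤ) :
    ∃ x, G.LinEquiv d x ∧ ∀ v, v ≠ v0 → 0 ≤ x v := by
  obtain ⟨h, -, hdiv⟩ := hc.exists_nonneg_one_le_div v0
  let B := ∑ v, |d v|
  refine ⟨d + G.div (B • h), linEquiv_add_div d _, fun v hv => ?_⟩
  have hB : |d v| ≤ B := Finset.single_le_sum (fun w _ => abs_nonneg (d w)) (Finset.mem_univ v)
  have hBdiv : B ≤ B * G.div h v :=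
    le_mul_of_one_le_right ((abs_nonneg _).trans hB) (hdiv v hv)
  rw [div_smul, Pi.add_apply, Pi.smul_apply, smul_eq_mul]
  linarith [neg_abs_le (d v)]

lemma le_deg_sub_of_nonneg_off {x : V → ℤ} {v0 : V} (hx : ∀ v, v ≠ v0 → 0 ≤ x v)
    (v : V) :
    x v ≤ deg x - min (x v0) 0 := by
  have hsplit : deg x = x v0 + ∑ w ∈ Finset.univ.erase v0, x w :=
    (Finset.add_sum_erase _ x (Finset.mem_univ v0)).symm
  have hrest : ∀ w ∈ Finset.univ.erase v0, 0 ≤ x w :=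
    fun w hw => hx w (Finset.ne_of_mem_erase hw)
  by_cases hv : v = v0
  · subst hv
    linarith [min_le_right (x v) 0, Finset.sum_nonneg hrest]
  · linarith [min_le_left (x v0) 0,
      Finset.single_le_sum hrest (Finset.mem_erase.2 ⟨hv, Finset.mem_univ v⟩)]

theorem Connected.exists_reduced_linEquiv [DecidableEq V] (hc : G.Connected) (v0 : V)
    (d : V → ℤ) : ∃ x, G.Reduced v0 x ∧ G.LinEquiv d x := by
  obtain ⟨h, h_nonneg, h_div⟩ := hc.exists_nonneg_one_le_div v0
  obtain ⟨x₀, hx₀, hx₀_nonneg⟩ := hc.exists_linEquiv_nonneg_off v0 d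
  let T : Set (V → ℤ) := {x | G.LinEquiv d x ∧ (∀ v, v ≠ v0 → 0 ≤ x v) ∧ x₀ v0 ≤ x v0}
  let Φ : (V → ℤ) → ℤ := fun x => ∑ v, h v * x v
  have hbdd : ∀ x ∈ T, Φ x ≤ ∑ v, h v * (deg d - min (x₀ v0) 0) :=
    fun x ⟨hdx, hx_nonneg, hx_v0⟩ => Finset.sum_le_sum fun v _ => by
      have := le_deg_sub_of_nonneg_off hx_nonneg v
      rw [hdx.deg_eq] at this
      exact mul_le_mul_of_nonneg_left (by linarith [min_le_min_right 0 hx_v0]) (h_nonneg v)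
  obtain ⟨_, ⟨x, hxT, rfl⟩, hmax⟩ := Int.exists_greatest_of_bdd
    (P := fun z => ∃ x ∈ T, Φ x = z) ⟨_, fun z ⟨x, hx, hz⟩ => hz ▸ hbdd x hx⟩
    ⟨Φ x₀, x₀, ⟨hx₀, hx₀_nonneg, le_rfl⟩, rfl⟩
  obtain ⟨hdx, hx_nonneg, hx_v0⟩ := hxT
  refine ⟨x, ⟨hx_nonneg, fun A hA hv0A => ?_⟩, hdx⟩
  by_contra! hfire
  set y := x + G.div ((A : Set V).indicator 1)
  have hy : ∀ v, y v = x v + G.div ((A : Set V).indicator 1) v := fun v => rfl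
  have hyT : y ∈ T := by
    refine ⟨hdx.trans (linEquiv_add_div x _), fun v hv => ?_, ?_⟩
    · by_cases hvA : v ∈ A
      · linarith [G.div_indicator_of_mem hvA, hfire v hvA, hy v]
      · linarith [G.div_indicator_nonneg_of_notMem hvA, hx_nonneg v hv, hy v]
    · linarith [G.div_indicator_nonneg_of_notMem hv0A, hy v0]
  have hgain : Φ x < Φ y := by
    have := Finset.sum_pos
      (fun v hv => zero_lt_one.trans_le (h_div v (ne_of_mem_of_not_mem hv hv0A))) hA
    simp only [Φ, y, sum_mul_add_div_indicator]
    linarith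
  exact (hmax _ ⟨y, hyT, rfl⟩).not_gt hgain

end Existence

end MultiGraph

theorem statement_2_general {V : Type} [Fintype V] [DecidableEq V]
    (G : MultiGraph V) (hc : G.Connected) (v0 : V) (d : V → ℤ) :
    ∃ d' : V → ℤ, (G.Reduced v0 d' ∧ G.LinEquiv d d') ∧
      (∀ d'' : V → ℤ, G.Reduced v0 d'' → G.LinEquiv d d'' → d'' = d') ∧
      (0 ≤ G.rank d ↔ Effective d') := by
  obtain ⟨d', hred, hd⟩ := hc.exists_reduced_linEquiv v0 d
  refine ⟨d', ⟨hred, hd⟩,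
    fun d'' hred'' hd'' => hred.eq_of_linEquiv hred'' (hd.symm.trans hd''), ?_⟩
  rw [rank_nonneg_iff_winnable]
  exact ⟨fun ⟨e, he, hde⟩ => hred.effective_of_linEquiv he (hd.symm.trans hde),
    fun hd' => ⟨d', hd', hd⟩⟩

/-- existence and uniqueness of the `v0`-reduced representative,
and effectivity iff the rank is nonnegative. -/
theorem statement_2 {V : Type} [Fintype V] [DecidableEq V]
    (G : MultiGraph V) (hl : G.Loopless) (hc : G.Connected) (v0 : V) (d : V → ℤ) :
    ∃ d' : V → ℤ, (G.Reduced v0 d' ∧ G.LinEquiv d d') ∧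
      (∀ d'' : V → ℤ, G.Reduced v0 d'' → G.LinEquiv d d'' → d'' = d') ∧
      (0 ≤ G.rank d ↔ Effective d') :=
  statement_2_general G hc v0 d

end BN
end

section
/- Let Ḡ = (G, ω) be a vertex-weighted graph and d a divisor on G. If the weighted rank r_Ḡ(d) ≥ 0 (i.e., the rank of d computed on the virtual loopless graph Ḡ• is ≥ 0), then there exists an effective divisor e ∈ Div(G) linearly equivalent to d in G itself. -/
open scoped Classical

namespace BN

variable {V V1 V2 : Type}

open MultiGraph

namespace MultiGraph

theorem winnable_of_rank_nonneg [Fintype V] {G : MultiGraph V} {d : V → ℤ}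
    (h : 0 ≤ G.rank d) : G.Winnable d := by
  by_contra hd
  simp [rank, hd] at h

end MultiGraph

section bullet

variable [Fintype V] (G : MultiGraph V) (ω : V → ℕ)

theorem bullet_div_inr (f : V ⊕ (Σ v : V, Fin (G.loops v + ω v)) → ℤ)
    (w : Σ v : V, Fin (G.loops v + ω v)) :
    (bullet G ω).div f (.inr w) = 2 * (f (.inl w.1) - f (.inr w)) := by
  simp [MultiGraph.div, bullet]

theorem bullet_div_inl (f : V ⊕ (Σ v : V, Fin (G.loops v + ω v)) → ℤ) (v : V) :
    (bullet G ω).div f (.inl v) =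
      G.div (f ∘ .inl) v + ∑ i, 2 * (f (.inr ⟨v, i⟩) - f (.inl v)) := by
  simp only [MultiGraph.div, bullet, Fintype.sum_sum_type, Fintype.sum_sigma, Function.comp_apply,
    add_right_inj]
  rw [Finset.sum_eq_single v (fun u _ hu => by simp [Ne.symm hu]) (by simp)]
  simp

/-- At an inserted vertex `w` over `v` the effective divisor is `2 (f v - f w)`, so `f w ≤ f v`:
the loop terms of `div f` at `v` are nonpositive, and dropping them (restricting `f` to `G`)
keeps the divisor effective. -/
theorem winnable_of_bullet_winnable {d : V → ℤ}
    (h : (bullet G ω).Winnable (Sum.elim d 0)) : G.Winnable d := by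
  obtain ⟨e, he, f, hf⟩ := h
  have hinr : ∀ w, f (.inr w) ≤ f (.inl w.1) := fun w => by
    have := congrFun hf (.inr w)
    simp only [Pi.sub_apply, Sum.elim_inr, Pi.zero_apply, sub_zero, bullet_div_inr] at this
    linarith [he (.inr w)]
  refine ⟨d + G.div (f ∘ .inl), fun v => ?_, f ∘ .inl, by simp⟩
  have hv := congrFun hf (.inl v)
  simp only [Pi.sub_apply, Sum.elim_inl, bullet_div_inl] at hv
  have hloops : ∑ i, 2 * (f (.inr ⟨v, i⟩) - f (.inl v)) ≤ 0 :=
    Finset.sum_nonpos fun i _ => by linarith [hinr ⟨v, i⟩]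
  simp only [Pi.add_apply]
  linarith [he (.inl v), hloops]

end bullet

theorem statement_3_general {V : Type} [Fintype V] [DecidableEq V]
    (G : MultiGraph V) (ω : V → ℕ) (d : V → ℤ)
    (h : 0 ≤ wrank G ω d) :
    ∃ e : V → ℤ, Effective e ∧ G.LinEquiv d e :=
  winnable_of_bullet_winnable G ω (winnable_of_rank_nonneg h)

/-- a divisor of nonnegative weighted rank is equivalent to an
effective divisor on `G` itself. -/
theorem statement_3 {V : Type} [Fintype V] [DecidableEq V]
    (G : MultiGraph V) (ω : V → ℕ) (hc : G.Connected) (d : V → ℤ)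
    (h : 0 ≤ wrank G ω d) :
    ∃ e : V → ℤ, Effective e ∧ G.LinEquiv d e :=
  statement_3_general G ω d h

end BN
end

section
/- Let Ḡ = (G, ω) be a vertex-weighted graph having a bridge e with endpoints v1, v2; let G1, G2 be the connected components of G minus e (v_i ∈ G_i) with restricted weight functions, let d ∈ Div(G) and let d_i be the restriction of d to G_i. Then r_Ḡ(d) ≤ r_Ḡ1(d1) + r_Ḡ2(d2) + 1 if v_i is a base-point of |d_i|• for both i = 1, 2, and r_Ḡ(d) ≤ r_Ḡ1(d1) + r_Ḡ2(d2) otherwise. -/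
open scoped Classical

namespace BN

variable {V V1 V2 : Type}

open MultiGraph

/-!
A divisor `D₁ ⊔ D₂` on the bridge join of `H₁` and `H₂` (bridge `w₁w₂`) is winnable iff for some
`k : ℤ` both `D₁ + k[w₁]` and `D₂ − k[w₂]` are winnable, since the principal divisors of the join
are the pairs of principal divisors corrected by `k([w₂] − [w₁])`. Now let `a + b ≤ 1` and choose
effective `eᵢ` of degree `rᵢ + 1` with `D₁ − a[w₁] − e₁` and `D₂ − b[w₂] − e₂` not winnable, where
`r₁ = r(D₁ − a[w₁])`, `r₂ = r(D₂ − b[w₂])`. Every `k` satisfies `k ≤ −a` or `k ≥ b`, so by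
monotonicity `D − (e₁ + e₂)` is not winnable, whence `r(D) ≤ r₁ + r₂ + 1`. Taking `a = b = 0`
gives the general bound; if `w₁` (say) is not a base-point, then `r(D₁ − [w₁]) = r(D₁) − 1`, and
`a = 1, b = 0` saves one. Finally, `Ḡ•` of the join is the bridge join of `Ḡ₁•` and `Ḡ₂•`.
-/

section Degree

variable [Fintype V]

lemma deg_add (a b : V → ℤ) : deg (a + b) = deg a + deg b := Finset.sum_add_distrib

lemma deg_sub (a b : V → ℤ) : deg (a - b) = deg a - deg b := Finset.sum_sub_distrib ..

lemma deg_elim [Fintype V1] [Fintype V2] (e1 : V1 → ℤ) (e2 : V2 → ℤ) :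
    deg (Sum.elim e1 e2) = deg e1 + deg e2 :=
  Fintype.sum_sum_type _

lemma Effective.deg_nonneg {e : V → ℤ} (he : Effective e) : 0 ≤ deg e :=
  Finset.sum_nonneg fun v _ => he v

lemma Effective.eq_zero_of_deg_eq_zero {e : V → ℤ} (he : Effective e) (hdeg : deg e = 0) :
    e = 0 :=
  funext fun v => (Finset.sum_eq_zero_iff_of_nonneg fun w _ => he w).1 hdeg v (Finset.mem_univ v)

lemma deg_comp_equiv {V' : Type} [Fintype V'] (φ : V ≃ V') (e : V' → ℤ) : deg (e ∘ φ) = deg e :=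
  φ.sum_comp e

lemma deg_smul_one [DecidableEq V] (c : ℤ) (v : V) : deg (c • one v) = c := by
  simp [deg, one]

end Degree

lemma effective_comp_equiv_iff {V' : Type} (φ : V ≃ V') {e : V' → ℤ} :
    Effective (e ∘ φ) ↔ Effective e :=
  (φ.surjective.forall (p := fun v' => 0 ≤ e v')).symm

lemma effective_one [DecidableEq V] (v : V) : Effective (one v) := by
  intro w
  unfold one
  split <;> simp

lemma Effective.elim {e1 : V1 → ℤ} {e2 : V2 → ℤ} (he1 : Effective e1) (he2 : Effective e2) :
    Effective (Sum.elim e1 e2) :=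
  Sum.forall.2 ⟨he1, he2⟩

lemma smul_one_mono [DecidableEq V] (v : V) : Monotone fun k : ℤ => k • one v :=
  fun _ _ hkl w => mul_le_mul_of_nonneg_right hkl (effective_one v w)

lemma effective_smul_one [DecidableEq V] {c : ℤ} (hc : 0 ≤ c) (v : V) : Effective (c • one v) :=
  fun w => mul_nonneg hc (effective_one v w)

namespace MultiGraph

section Rank

variable [Fintype V] (G : MultiGraph V)

lemma div_add_const (f : V → ℤ) (c : ℤ) : G.div (fun v => f v + c) = G.div f := by
  funext v
  refine Finset.sum_congr rfl fun w _ => ?_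
  ring

variable {G}

lemma Winnable.mono {d d' : V → ℤ} (h : G.Winnable d) (hle : d ≤ d') : G.Winnable d' := by
  obtain ⟨e, he, f, hf⟩ := h
  refine ⟨e + (d' - d), fun v => ?_, f, ?_⟩
  · simpa using add_nonneg (he v) (sub_nonneg.2 (hle v))
  · rw [← hf]
    abel

lemma Winnable.deg_nonneg {d : V → ℤ} (h : G.Winnable d) : 0 ≤ deg d := by
  obtain ⟨e, he, f, hf⟩ := h
  have hdeg : deg (e - d) = 0 := by rw [hf]; exact G.deg_div f
  rw [deg_sub] at hdeg
  linarith [he.deg_nonneg]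

variable (G)

def rankSet (d : V → ℤ) : Set ℕ :=
  {s : ℕ | ∀ e : V → ℤ, Effective e → deg e = (s : ℤ) → G.Winnable (d - e)}

lemma rank_eq_ite (d : V → ℤ) :
    G.rank d = if G.Winnable d then ((sSup (G.rankSet d) : ℕ) : ℤ) else -1 := rfl

lemma zero_mem_rankSet {d : V → ℤ} (h : G.Winnable d) : 0 ∈ G.rankSet d := by
  intro e he hdeg
  rwa [he.eq_zero_of_deg_eq_zero (by simpa using hdeg), sub_zero]

variable [DecidableEq V] [Nonempty V]

lemma mem_rankSet_of_le {d : V → ℤ} {s t : ℕ} (hs : s ∈ G.rankSet d) (hts : t ≤ s) :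
    t ∈ G.rankSet d := by
  intro e he hdeg
  obtain ⟨v⟩ := ‹Nonempty V›
  have hc : (0 : ℤ) ≤ s - t := by omega
  have hw := hs (e + ((s : ℤ) - t) • one v)
    (fun w => add_nonneg (he w) (effective_smul_one hc v w))
    (by rw [deg_add, deg_smul_one, hdeg]; ring)
  exact hw.mono (sub_le_sub_left (le_add_of_nonneg_right (effective_smul_one hc v)) d)

lemma bddAbove_rankSet (d : V → ℤ) : BddAbove (G.rankSet d) := by
  obtain ⟨v⟩ := ‹Nonempty V›
  refine ⟨(deg d).toNat, fun s hs => ?_⟩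
  have h := (hs _ (effective_smul_one (Nat.cast_nonneg s) v) (deg_smul_one _ v)).deg_nonneg
  rw [deg_sub, deg_smul_one] at h
  omega

lemma rank_le_of_not_winnable {d e : V → ℤ} (he : Effective e) (hw : ¬ G.Winnable (d - e)) :
    G.rank d ≤ deg e - 1 := by
  have hdeg := he.deg_nonneg
  rw [rank_eq_ite]
  split_ifs with hd
  · have hnot : (deg e).toNat ∉ G.rankSet d := fun hmem => hw (hmem e he (by omega))
    have hlt : ∀ s ∈ G.rankSet d, s < (deg e).toNat := fun s hs =>
      lt_of_not_ge fun hge => hnot (G.mem_rankSet_of_le hs hge)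
    have := hlt _ (Nat.sSup_mem ⟨0, G.zero_mem_rankSet hd⟩ (G.bddAbove_rankSet d))
    omega
  · omega

lemma exists_not_winnable (d : V → ℤ) :
    ∃ e : V → ℤ, Effective e ∧ deg e = G.rank d + 1 ∧ ¬ G.Winnable (d - e) := by
  by_cases hd : G.Winnable d
  · have hnot : sSup (G.rankSet d) + 1 ∉ G.rankSet d := fun hmem =>
      (le_csSup (G.bddAbove_rankSet d) hmem).not_gt (Nat.lt_succ_self _)
    simp only [rankSet, Set.mem_ofPred_eq, not_forall] at hnot
    obtain ⟨e, he, hdeg, hw⟩ := hnot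
    exact ⟨e, he, by rw [hdeg, rank_eq_ite, if_pos hd]; push_cast; rfl, hw⟩
  · refine ⟨0, fun _ => le_rfl, ?_, by simpa using hd⟩
    simp [rank_eq_ite, if_neg hd, deg]

lemma rank_sub_one_le (d : V → ℤ) (v : V) : G.rank (d - one v) ≤ G.rank d := by
  obtain ⟨e, he, hdeg, hw⟩ := G.exists_not_winnable d
  have hw' : ¬ G.Winnable (d - one v - e) := fun h =>
    hw (h.mono (sub_le_sub_right (sub_le_self d (effective_one v)) e))
  linarith [G.rank_le_of_not_winnable he hw']

end Rank

section Equiv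

variable {V' : Type} [Fintype V] [Fintype V'] {G : MultiGraph V} {G' : MultiGraph V'}
  (φ : V ≃ V') (hE : ∀ u v, G'.E (φ u) (φ v) = G.E u v)
include hE

lemma div_comp_equiv (f : V' → ℤ) : G.div (f ∘ φ) = G'.div f ∘ φ := by
  funext v
  simp only [div, Function.comp_apply, ← hE]
  exact φ.sum_comp fun w' => (G'.E (φ v) w' : ℤ) * (f w' - f (φ v))

lemma principal_iff_comp_equiv (P : V' → ℤ) : G'.Principal P ↔ G.Principal (P ∘ φ) := by
  refine ⟨fun ⟨f, hf⟩ => ⟨f ∘ φ, by rw [hf, div_comp_equiv φ hE]⟩, fun ⟨g, hg⟩ => ⟨g ∘ φ.symm, ?_⟩⟩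
  apply φ.surjective.injective_comp_right
  simp only [← div_comp_equiv φ hE, Function.comp_assoc, φ.symm_comp_self, Function.comp_id, hg]

lemma winnable_iff_comp_equiv (D : V' → ℤ) : G'.Winnable D ↔ G.Winnable (D ∘ φ) := by
  refine ⟨fun ⟨e, he, hP⟩ => ⟨e ∘ φ, fun v => he (φ v), (principal_iff_comp_equiv φ hE _).1 hP⟩,
    fun ⟨e, he, hP⟩ => ⟨e ∘ φ.symm, fun v' => he (φ.symm v'), ?_⟩⟩
  have hcomp : (e ∘ φ.symm - D) ∘ φ = e - D ∘ φ := by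
    funext v
    simp
  rwa [LinEquiv, principal_iff_comp_equiv φ hE, hcomp]

lemma rank_eq_rank_comp_equiv (D : V' → ℤ) : G'.rank D = G.rank (D ∘ φ) := by
  have hset : G'.rankSet D = G.rankSet (D ∘ φ) := by
    ext s
    simp only [rankSet, Set.mem_ofPred_eq, φ.injective.surjective_comp_right.forall,
      effective_comp_equiv_iff, deg_comp_equiv, winnable_iff_comp_equiv φ hE]
    rfl
  rw [rank_eq_ite, rank_eq_ite, hset, winnable_iff_comp_equiv φ hE]

end Equiv

end MultiGraph

open MultiGraph

section BridgeJoin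

variable [Fintype V1] [Fintype V2] [DecidableEq V1] [DecidableEq V2]
  (H1 : MultiGraph V1) (H2 : MultiGraph V2) (w1 : V1) (w2 : V2)

lemma div_bridgeJoin_inl (f : V1 ⊕ V2 → ℤ) (a : V1) :
    (bridgeJoin H1 H2 w1 w2).div f (.inl a) =
      H1.div (f ∘ .inl) a + (f (.inr w2) - f (.inl w1)) * one w1 a := by
  unfold MultiGraph.div bridgeJoin one
  rw [Fintype.sum_sum_type]
  by_cases ha : a = w1
  · subst ha
    simp [ite_mul, Finset.sum_ite_eq', apply_ite]
  · simp [ha]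

lemma div_bridgeJoin_inr (f : V1 ⊕ V2 → ℤ) (b : V2) :
    (bridgeJoin H1 H2 w1 w2).div f (.inr b) =
      H2.div (f ∘ .inr) b - (f (.inr w2) - f (.inl w1)) * one w2 b := by
  unfold MultiGraph.div bridgeJoin one
  rw [Fintype.sum_sum_type]
  by_cases hb : b = w2
  · subst hb
    simp [ite_mul, Finset.sum_ite_eq', apply_ite, and_comm]
    ring
  · simp [hb, and_comm]

lemma principal_bridgeJoin_elim_iff (P1 : V1 → ℤ) (P2 : V2 → ℤ) :
    (bridgeJoin H1 H2 w1 w2).Principal (Sum.elim P1 P2) ↔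
      ∃ k : ℤ, H1.Principal (P1 - k • one w1) ∧ H2.Principal (P2 + k • one w2) := by
  constructor
  · rintro ⟨f, hf⟩
    refine ⟨f (.inr w2) - f (.inl w1), ⟨f ∘ .inl, funext fun a => ?_⟩,
      ⟨f ∘ .inr, funext fun b => ?_⟩⟩
    · have h := congrFun hf (.inl a)
      rw [div_bridgeJoin_inl] at h
      simp only [Sum.elim_inl] at h
      simp only [Pi.sub_apply, Pi.smul_apply, smul_eq_mul]
      linarith
    · have h := congrFun hf (.inr b)
      rw [div_bridgeJoin_inr] at h
      simp only [Sum.elim_inr] at h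
      simp only [Pi.add_apply, Pi.smul_apply, smul_eq_mul]
      linarith
  · rintro ⟨k, ⟨f1, h1⟩, ⟨f2, h2⟩⟩
    -- shift `f2` so that `f` jumps by exactly `k` across the bridge
    let f : V1 ⊕ V2 → ℤ := Sum.elim f1 fun b => f2 b + (k + f1 w1 - f2 w2)
    have hjump : f (.inr w2) - f (.inl w1) = k := by simp only [f, Sum.elim_inl, Sum.elim_inr]; ring
    refine ⟨f, funext fun x => ?_⟩
    rcases x with a | b
    · have h := congrFun h1 a
      simp only [Pi.sub_apply, Pi.smul_apply, smul_eq_mul] at h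
      rw [div_bridgeJoin_inl, hjump]
      simp only [f, Sum.elim_inl, Sum.elim_comp_inl]
      linarith
    · have h := congrFun h2 b
      simp only [Pi.add_apply, Pi.smul_apply, smul_eq_mul] at h
      rw [div_bridgeJoin_inr, hjump]
      simp only [f, Sum.elim_inr, Sum.elim_comp_inr, div_add_const]
      linarith

lemma winnable_bridgeJoin_elim_iff (D1 : V1 → ℤ) (D2 : V2 → ℤ) :
    (bridgeJoin H1 H2 w1 w2).Winnable (Sum.elim D1 D2) ↔
      ∃ k : ℤ, H1.Winnable (D1 + k • one w1) ∧ H2.Winnable (D2 - k • one w2) := by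
  constructor
  · rintro ⟨e, he, hP⟩
    rw [LinEquiv, ← Sum.elim_comp_inl_inr e, ← Sum.elim_sub_sub,
      principal_bridgeJoin_elim_iff] at hP
    obtain ⟨k, h1, h2⟩ := hP
    refine ⟨k, ⟨e ∘ .inl, fun a => he _, ?_⟩, ⟨e ∘ .inr, fun b => he _, ?_⟩⟩
    · rwa [LinEquiv, ← sub_sub]
    · rwa [LinEquiv, ← sub_add]
  · rintro ⟨k, ⟨e1, he1, h1⟩, ⟨e2, he2, h2⟩⟩
    refine ⟨Sum.elim e1 e2, he1.elim he2, ?_⟩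
    rw [LinEquiv, ← Sum.elim_sub_sub, principal_bridgeJoin_elim_iff]
    exact ⟨k, by rwa [sub_sub], by rwa [sub_add]⟩

lemma not_winnable_bridgeJoin_elim_sub {D1 e1 : V1 → ℤ} {D2 e2 : V2 → ℤ} {a b : ℤ}
    (hab : a + b ≤ 1) (h1 : ¬ H1.Winnable (D1 - e1 - a • one w1))
    (h2 : ¬ H2.Winnable (D2 - e2 - b • one w2)) :
    ¬ (bridgeJoin H1 H2 w1 w2).Winnable (Sum.elim (D1 - e1) (D2 - e2)) := by
  rw [winnable_bridgeJoin_elim_iff]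
  rintro ⟨k, hk1, hk2⟩
  rcases le_or_gt k (-a) with hk | hk
  · refine h1 (hk1.mono ?_)
    rw [sub_eq_add_neg _ (a • _), ← neg_smul]
    exact add_le_add_right (smul_one_mono w1 hk) _
  · exact h2 (hk2.mono (sub_le_sub_left (smul_one_mono w2 (by omega)) _))

lemma rank_bridgeJoin_elim_le (D1 : V1 → ℤ) (D2 : V2 → ℤ) {a b : ℤ} (hab : a + b ≤ 1) :
    (bridgeJoin H1 H2 w1 w2).rank (Sum.elim D1 D2) ≤
      H1.rank (D1 - a • one w1) + H2.rank (D2 - b • one w2) + 1 := by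
  have : Nonempty V1 := ⟨w1⟩
  have : Nonempty V2 := ⟨w2⟩
  obtain ⟨e1, he1, hdeg1, hw1⟩ := H1.exists_not_winnable (D1 - a • one w1)
  obtain ⟨e2, he2, hdeg2, hw2⟩ := H2.exists_not_winnable (D2 - b • one w2)
  have hw : ¬ (bridgeJoin H1 H2 w1 w2).Winnable (Sum.elim D1 D2 - Sum.elim e1 e2) := by
    rw [← Sum.elim_sub_sub]
    exact not_winnable_bridgeJoin_elim_sub H1 H2 w1 w2 hab (by rwa [sub_right_comm])
      (by rwa [sub_right_comm])
  have h := rank_le_of_not_winnable _ (he1.elim he2) hw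
  rw [deg_elim] at h
  linarith

lemma rank_bridgeJoin_elim_le_ite (D1 : V1 → ℤ) (D2 : V2 → ℤ) :
    (bridgeJoin H1 H2 w1 w2).rank (Sum.elim D1 D2) ≤ H1.rank D1 + H2.rank D2 +
      (if H1.rank (D1 - one w1) = H1.rank D1 ∧ H2.rank (D2 - one w2) = H2.rank D2
        then 1 else 0) := by
  have : Nonempty V1 := ⟨w1⟩
  have : Nonempty V2 := ⟨w2⟩
  split_ifs with hbase
  · simpa using rank_bridgeJoin_elim_le H1 H2 w1 w2 D1 D2 (a := 0) (b := 0) (by norm_num)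
  · rcases not_and_or.mp hbase with h | h
    · have := rank_bridgeJoin_elim_le H1 H2 w1 w2 D1 D2 (a := 1) (b := 0) (by norm_num)
      have := H1.rank_sub_one_le D1 w1
      simp only [one_smul, zero_smul, sub_zero] at *
      omega
    · have := rank_bridgeJoin_elim_le H1 H2 w1 w2 D1 D2 (a := 0) (b := 1) (by norm_num)
      have := H2.rank_sub_one_le D2 w2
      simp only [one_smul, zero_smul, sub_zero] at *
      omega

end BridgeJoin

section Weighted

variable [DecidableEq V1] [DecidableEq V2]
  (G1 : MultiGraph V1) (G2 : MultiGraph V2) (ω1 : V1 → ℕ) (ω2 : V2 → ℕ) (v1 : V1) (v2 : V2)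

def bulletBridgeJoinEquiv :
    ((V1 ⊕ V2) ⊕ (Σ v : V1 ⊕ V2,
        Fin ((bridgeJoin G1 G2 v1 v2).loops v + Sum.elim ω1 ω2 v))) ≃
      ((V1 ⊕ (Σ v : V1, Fin (G1.loops v + ω1 v))) ⊕
        (V2 ⊕ (Σ v : V2, Fin (G2.loops v + ω2 v)))) where
  toFun
    | .inl (.inl a) => .inl (.inl a)
    | .inl (.inr b) => .inr (.inl b)
    | .inr ⟨.inl a, i⟩ => .inl (.inr ⟨a, i⟩)
    | .inr ⟨.inr b, i⟩ => .inr (.inr ⟨b, i⟩)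
  invFun
    | .inl (.inl a) => .inl (.inl a)
    | .inr (.inl b) => .inl (.inr b)
    | .inl (.inr ⟨a, i⟩) => .inr ⟨.inl a, i⟩
    | .inr (.inr ⟨b, i⟩) => .inr ⟨.inr b, i⟩
  left_inv x := by rcases x with (a | b) | ⟨(a | b), i⟩ <;> rfl
  right_inv x := by rcases x with (a | ⟨a, i⟩) | (b | ⟨b, i⟩) <;> rfl

lemma E_bulletBridgeJoinEquiv (x y) :
    (bridgeJoin (bullet G1 ω1) (bullet G2 ω2) (.inl v1) (.inl v2)).E
        (bulletBridgeJoinEquiv G1 G2 ω1 ω2 v1 v2 x) (bulletBridgeJoinEquiv G1 G2 ω1 ω2 v1 v2 y) =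
      (bullet (bridgeJoin G1 G2 v1 v2) (Sum.elim ω1 ω2)).E x y := by
  rcases x with (a | b) | ⟨(a | b), i⟩ <;> rcases y with (a' | b') | ⟨(a' | b'), i'⟩ <;>
    (dsimp only [bulletBridgeJoinEquiv, Equiv.coe_fn_mk]; simp [bridgeJoin, bullet])

lemma wrank_bridgeJoin [Fintype V1] [Fintype V2] (d : V1 ⊕ V2 → ℤ) :
    wrank (bridgeJoin G1 G2 v1 v2) (Sum.elim ω1 ω2) d =
      (bridgeJoin (bullet G1 ω1) (bullet G2 ω2) (.inl v1) (.inl v2)).rank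
        (Sum.elim (Sum.elim (d ∘ .inl) 0) (Sum.elim (d ∘ .inr) 0)) := by
  rw [wrank, rank_eq_rank_comp_equiv _ (E_bulletBridgeJoinEquiv G1 G2 ω1 ω2 v1 v2)]
  congr
  funext x
  rcases x with (a | b) | ⟨(a | b), i⟩ <;> rfl

end Weighted

lemma elim_sub_one_zero {β : Type} [DecidableEq V] [DecidableEq β] (d : V → ℤ) (v : V) :
    Sum.elim (d - one v) (0 : β → ℤ) = Sum.elim d 0 - one (.inl v) := by
  funext x
  rcases x with a | b <;> simp [one]

lemma wBasePoint_iff [Fintype V] [DecidableEq V] (G : MultiGraph V) (ω : V → ℕ) (d : V → ℤ)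
    (v : V) : wBasePoint G ω d v ↔
      (bullet G ω).rank (Sum.elim d 0 - one (.inl v)) = (bullet G ω).rank (Sum.elim d 0) := by
  rw [wBasePoint, wrank, wrank, elim_sub_one_zero (β := Σ v, Fin (G.loops v + ω v))]

theorem statement_4_general {V1 V2 : Type} [Fintype V1] [DecidableEq V1] [Fintype V2] [DecidableEq V2]
    (G1 : MultiGraph V1) (G2 : MultiGraph V2)
    (ω1 : V1 → ℕ) (ω2 : V2 → ℕ) (v1 : V1) (v2 : V2) (d : V1 ⊕ V2 → ℤ) :
    wrank (bridgeJoin G1 G2 v1 v2) (Sum.elim ω1 ω2) d ≤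
      wrank G1 ω1 (d ∘ Sum.inl) + wrank G2 ω2 (d ∘ Sum.inr) +
      (if wBasePoint G1 ω1 (d ∘ Sum.inl) v1 ∧ wBasePoint G2 ω2 (d ∘ Sum.inr) v2
        then 1 else 0) := by
  rw [wrank_bridgeJoin G1 G2 ω1 ω2 v1 v2, wBasePoint_iff, wBasePoint_iff, wrank, wrank]
  -- the `if` here is decided classically, in the lemma by `Int.decEq`
  convert rank_bridgeJoin_elim_le_ite (bullet G1 ω1) (bullet G2 ω2) (.inl v1) (.inl v2) _ _

/-- Proposition: bridge inequality for weighted ranks. -/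
theorem statement_4 {V1 V2 : Type} [Fintype V1] [DecidableEq V1] [Fintype V2] [DecidableEq V2]
    (G1 : MultiGraph V1) (G2 : MultiGraph V2)
    (hc1 : G1.Connected) (hc2 : G2.Connected)
    (ω1 : V1 → ℕ) (ω2 : V2 → ℕ) (v1 : V1) (v2 : V2) (d : V1 ⊕ V2 → ℤ) :
    wrank (bridgeJoin G1 G2 v1 v2) (Sum.elim ω1 ω2) d ≤
      wrank G1 ω1 (d ∘ Sum.inl) + wrank G2 ω2 (d ∘ Sum.inr) +
      (if wBasePoint G1 ω1 (d ∘ Sum.inl) v1 ∧ wBasePoint G2 ω2 (d ∘ Sum.inr) v2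
        then 1 else 0) :=
  statement_4_general G1 G2 ω1 ω2 v1 v2 d

end BN
end

section
/- Let G be a loopless finite connected graph with bridge e (endpoints v1, v2) and components G1, G2 of G ∖ {e}. Suppose h is a divisor on G2 that is v2-reduced with h(v2) = 0, and f is a divisor on G1 that is v1-reduced. Then the divisor j1(f) + j2(h) on G (pushforwards along the vertex inclusions) is v1-reduced. -/
/-! A nonempty set `A` of vertices avoiding `v1` either contains `v2`, whose out-degree is at
least `1` because of the bridge while `h v2 = 0`, or meets one side of the bridge in a nonempty
set avoiding that side's base vertex. In the second case the witness given by reducedness on that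
side works in the whole graph, because out-degrees can only grow when a graph is embedded into a
larger one. -/

open scoped Classical

namespace BN

variable {V V1 V2 : Type}

open MultiGraph

namespace MultiGraph

variable {W : Type} [Fintype V] [DecidableEq V] [Fintype W] [DecidableEq W]

theorem outdeg_preimage_le_of_embedding (G : MultiGraph V) (H : MultiGraph W) (φ : W ↪ V)
    (hφ : ∀ x y, H.E x y = G.E (φ x) (φ y)) (A : Finset V) (x : W) :
    H.outdeg (A.preimage φ φ.injective.injOn) x ≤ G.outdeg A (φ x) := by
  have hsub : (Finset.univ.filter (· ∉ A.preimage φ φ.injective.injOn)).map φ ⊆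
      Finset.univ.filter (· ∉ A) := by
    intro v hv
    obtain ⟨y, hy, rfl⟩ := Finset.mem_map.1 hv
    simpa using hy
  calc H.outdeg (A.preimage φ φ.injective.injOn) x
      = ∑ v ∈ (Finset.univ.filter (· ∉ A.preimage φ φ.injective.injOn)).map φ, G.E (φ x) v := by
        simp only [outdeg, Finset.sum_map, hφ]
    _ ≤ G.outdeg A (φ x) := Finset.sum_le_sum_of_subset hsub

theorem exists_lt_outdeg_of_embedding (G : MultiGraph V) (H : MultiGraph W) (φ : W ↪ V)
    (hφ : ∀ x y, H.E x y = G.E (φ x) (φ y)) {d : V → ℤ} {A : Finset V}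
    (h : ∃ x ∈ A.preimage φ φ.injective.injOn,
      d (φ x) < H.outdeg (A.preimage φ φ.injective.injOn) x) :
    ∃ v ∈ A, d v < G.outdeg A v := by
  obtain ⟨x, hxA, hx⟩ := h
  refine ⟨φ x, Finset.mem_preimage.1 hxA, hx.trans_le ?_⟩
  exact_mod_cast outdeg_preimage_le_of_embedding G H φ hφ A x

end MultiGraph

theorem outdeg_bridgeJoin_inr_pos [Fintype V1] [DecidableEq V1] [Fintype V2] [DecidableEq V2]
    (G1 : MultiGraph V1) (G2 : MultiGraph V2) (v1 : V1) (v2 : V2) {A : Finset (V1 ⊕ V2)}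
    (hv1 : Sum.inl v1 ∉ A) :
    0 < (bridgeJoin G1 G2 v1 v2).outdeg A (Sum.inr v2) := by
  calc 0 < 1 := Nat.one_pos
    _ = (bridgeJoin G1 G2 v1 v2).E (Sum.inr v2) (Sum.inl v1) := by simp [bridgeJoin]
    _ ≤ _ := Finset.single_le_sum (fun _ _ => Nat.zero_le _) (by simpa using hv1)

theorem statement_12_general {V1 V2 : Type} [Fintype V1] [DecidableEq V1] [Fintype V2] [DecidableEq V2]
    (G1 : MultiGraph V1) (G2 : MultiGraph V2)
    (v1 : V1) (v2 : V2) (f : V1 → ℤ) (h : V2 → ℤ)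
    (hf : G1.Reduced v1 f) (hh : G2.Reduced v2 h) (hv2 : h v2 = 0) :
    (bridgeJoin G1 G2 v1 v2).Reduced (Sum.inl v1) (Sum.elim f h) := by
  refine ⟨?_, fun A hA hv1 => ?_⟩
  · rintro (a | b) hv
    · exact hf.1 a (by rintro rfl; exact hv rfl)
    · by_cases hb : b = v2
      · simp [hb, hv2]
      · exact hh.1 b hb
  by_cases hv2A : Sum.inr v2 ∈ A
  · refine ⟨_, hv2A, ?_⟩
    simpa [hv2] using outdeg_bridgeJoin_inr_pos G1 G2 v1 v2 hv1
  obtain ⟨a | b, hx⟩ := hA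
  · exact exists_lt_outdeg_of_embedding _ G1 .inl (fun _ _ => rfl)
      (hf.2 _ ⟨a, by simpa using hx⟩ (by simpa using hv1))
  · exact exists_lt_outdeg_of_embedding _ G2 .inr (fun _ _ => rfl)
      (hh.2 _ ⟨b, by simpa using hx⟩ (by simpa using hv2A))

/-- glueing a `v1`-reduced divisor and a `v2`-reduced divisor
vanishing at `v2` across a bridge gives a `v1`-reduced divisor. -/
theorem statement_12 {V1 V2 : Type} [Fintype V1] [DecidableEq V1] [Fintype V2] [DecidableEq V2]
    (G1 : MultiGraph V1) (G2 : MultiGraph V2)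
    (hl1 : G1.Loopless) (hl2 : G2.Loopless)
    (hc1 : G1.Connected) (hc2 : G2.Connected)
    (v1 : V1) (v2 : V2) (f : V1 → ℤ) (h : V2 → ℤ)
    (hf : G1.Reduced v1 f) (hh : G2.Reduced v2 h) (hv2 : h v2 = 0) :
    (bridgeJoin G1 G2 v1 v2).Reduced (Sum.inl v1) (Sum.elim f h) :=
  statement_12_general G1 G2 v1 v2 f h hf hh hv2

end BN
end
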